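/- Let f: ℝⁿ → ℝ be continuously differentiable satisfying the L-descent condition for some L > 0, and let sequences {x^k}, {g^k}, {d^k}, {ε_k}, {r_k}, {t_k} follow the IRG scheme with θ < μ, with ρ_k = ε_k for all k, and with constant-type stepsizes t_k ∈ [δ', (2 − δ)/L] for all k, where δ, δ' > 0 and δ' ≤ (2 − δ)/L. Assume that x̄ is an accumulation point of {x^k} and that f satisfies the KL property at x̄. Then x̄ is a stationary point of f and the whole sequence {x^k} converges to x̄. -/

import Mathlib

/-!
With `⟪∇f(x^k), d^k⟫ ≤ -‖d^k‖²` (the inexactness of `g^k` is absorbed by the shortening of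
`d^k`), the descent condition and `t_k ≤ (2 - δ)/L` give sufficient decrease
`a ‖x^{k+1} - x^k‖² ≤ f(x^k) - f(x^{k+1})`. As `f(x^k)` converges, null steps occur infinitely
often; on them `r_k` shrinks by `μ` and `ε_k / r_k` by `θ / μ < 1`, so `r_k, ε_k → 0` and
eventually `ε_k ≤ r_k`. From then on every step that moves satisfies the relative error bound
`‖∇f(x^k)‖ ≤ 3 ‖d^k‖ ≤ b ‖x^{k+1} - x^k‖` (using `t_k ≥ δ'`).

With the desingularizing function `φ(s) = ∫₀ˢ dτ / ψ(τ)` and `F_k = f(x^k) - f(x̄)`, the KL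
inequality turns these two bounds into `‖x^{k+1} - x^k‖ ≤ (b / a) (φ(F_k) - φ(F_{k+1}))`, as long
as `x^k` stays in the KL neighbourhood. Starting close enough to `x̄` along the convergent
subsequence, the telescoping sum keeps the iterates in that neighbourhood, so the sequence has
finite length and converges, necessarily to `x̄`. Finally `‖∇f(x^k)‖ ≤ r_k + 2 ε_k` on null
steps forces `∇f(x̄) = 0`.
-/

open Filter

/-- The general IRG scheme (Algorithm 1): inexact gradients `g^k` with automatically
controlled errors `ε_k` (and manual errors `ρ_k`), radius updates with factors
`μ, θ ∈ (0,1)`, reduced directions `d^k`, and iterations `x^{k+1} = x^k + t_k d^k`. -/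
def IRGScheme {n : ℕ} (f : EuclideanSpace ℝ (Fin n) → ℝ)
    (x g d : ℕ → EuclideanSpace ℝ (Fin n)) (ε r ρ t : ℕ → ℝ) (μ θ : ℝ) : Prop :=
  (0 < μ ∧ μ < 1) ∧ (0 < θ ∧ θ < 1) ∧
  (∀ k, 0 < ε k) ∧ (∀ k, 0 < r k) ∧ (∀ k, 0 < ρ k) ∧ (∀ k, 0 < t k) ∧
  (∀ k, ‖g k - gradient f (x k)‖ ≤ min (ε k) (ρ k)) ∧
  (∀ k, ‖g k‖ ≤ r k + ε k →
    r (k + 1) = μ * r k ∧ ε (k + 1) = θ * ε k ∧ d k = 0) ∧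
  (∀ k, r k + ε k < ‖g k‖ →
    r (k + 1) = r k ∧ ε (k + 1) = ε k ∧
      d k = -(((‖g k‖ - ε k) / ‖g k‖) • g k)) ∧
  (∀ k, x (k + 1) = x k + t k • d k)

/-- The Kurdyka–Łojasiewicz property of `f` at `xbar` (Definition 2.2): there are
`η > 0`, a neighborhood `U` of `xbar`, and a nondecreasing function
`ψ : (0, η) → (0, ∞)` with `1/ψ` integrable over `(0, η)` such that
`‖∇f(y)‖ ≥ ψ(f(y) - f(xbar))` whenever `y ∈ U` and `f(xbar) < f(y) < f(xbar) + η`. -/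
def KLProperty {n : ℕ} (f : EuclideanSpace ℝ (Fin n) → ℝ)
    (xbar : EuclideanSpace ℝ (Fin n)) : Prop :=
  ∃ η > (0 : ℝ), ∃ U ∈ nhds xbar, ∃ ψ : ℝ → ℝ,
    (∀ s ∈ Set.Ioo (0 : ℝ) η, 0 < ψ s) ∧
    MonotoneOn ψ (Set.Ioo (0 : ℝ) η) ∧
    MeasureTheory.IntegrableOn (fun s => 1 / ψ s) (Set.Ioo (0 : ℝ) η) ∧
    ∀ y ∈ U, f xbar < f y → f y < f xbar + η → ψ (f y - f xbar) ≤ ‖gradient f y‖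

open Set MeasureTheory Topology

noncomputable def desingularizer (ψ : ℝ → ℝ) (s : ℝ) : ℝ := ∫ τ in Ioc 0 s, 1 / ψ τ

section Desingularizer

variable {ψ : ℝ → ℝ} {η : ℝ}

theorem desingularizer_nonneg (hψ : ∀ s ∈ Ioo 0 η, 0 < ψ s) {s : ℝ} (hs : s < η) :
    0 ≤ desingularizer ψ s :=
  setIntegral_nonneg measurableSet_Ioc fun τ hτ =>
    (one_div_pos.2 (hψ τ ⟨hτ.1, hτ.2.trans_lt hs⟩)).le

theorem sub_div_le_desingularizer_sub (hψ : ∀ s ∈ Ioo 0 η, 0 < ψ s)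
    (hmono : MonotoneOn ψ (Ioo 0 η)) (hint : IntegrableOn (fun s => 1 / ψ s) (Ioo 0 η))
    {a b : ℝ} (ha : 0 ≤ a) (hab : a ≤ b) (hb : b < η) :
    (b - a) / ψ b ≤ desingularizer ψ b - desingularizer ψ a := by
  have hsub : Ioc 0 b ⊆ Ioo 0 η := fun τ hτ => ⟨hτ.1, hτ.2.trans_lt hb⟩
  have hint_ab : IntegrableOn (fun s => 1 / ψ s) (Ioc a b) :=
    hint.mono_set ((Ioc_subset_Ioc_left ha).trans hsub)
  rw [desingularizer, desingularizer, ← Ioc_union_Ioc_eq_Ioc ha hab,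
    setIntegral_union (Ioc_disjoint_Ioc_of_le le_rfl) measurableSet_Ioc
      (hint.mono_set ((Ioc_subset_Ioc_right hab).trans hsub)) hint_ab, add_sub_cancel_left]
  calc (b - a) / ψ b = 1 / ψ b * volume.real (Ioc a b) := by
        rw [Real.volume_real_Ioc, max_eq_left (sub_nonneg.2 hab)]; ring
    _ ≤ ∫ τ in Ioc a b, 1 / ψ τ := by
        refine setIntegral_ge_of_const_le_real measurableSet_Ioc (by simp) (fun τ hτ => ?_) hint_ab
        have hτ' : τ ∈ Ioo 0 η := hsub ⟨ha.trans_lt hτ.1, hτ.2⟩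
        have hb' : b ∈ Ioo 0 η := hsub ⟨(ha.trans_lt hτ.1).trans_le hτ.2, le_rfl⟩
        exact one_div_le_one_div_of_le (hψ τ hτ') (hmono hτ' hb' hτ.2)

theorem tendsto_desingularizer_nhdsGE_zero (hη : 0 < η)
    (hint : IntegrableOn (fun s => 1 / ψ s) (Ioo 0 η)) :
    Tendsto (desingularizer ψ) (𝓝[≥] 0) (𝓝 0) := by
  have hint' : IntegrableOn (fun s => 1 / ψ s) (Icc 0 (η / 2)) :=
    (integrableOn_Icc_iff_integrableOn_Ioo (by simp) (by simp)).2
      (hint.mono_set (Ioo_subset_Ioo_right (by linarith)))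
  have hcont := intervalIntegral.continuousOn_primitive hint' 0 ⟨le_rfl, by linarith⟩
  rw [ContinuousWithinAt, nhdsWithin_Icc_eq_nhdsGE (by linarith), Ioc_self,
    Measure.restrict_empty, integral_zero_measure] at hcont
  exact hcont

theorem le_div_mul_desingularizer_sub (hψ : ∀ s ∈ Ioo 0 η, 0 < ψ s)
    (hmono : MonotoneOn ψ (Ioo 0 η)) (hint : IntegrableOn (fun s => 1 / ψ s) (Ioo 0 η))
    {a b s s' δ : ℝ} (ha : 0 < a) (hb : 0 < b) (hδ : 0 ≤ δ) (hs' : 0 ≤ s') (hs : s < η)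
    (hdecr : a * δ ^ 2 ≤ s - s') (hrel : 0 < s → 0 < δ → ψ s ≤ b * δ) :
    δ ≤ b / a * (desingularizer ψ s - desingularizer ψ s') := by
  have hss' : s' ≤ s := by nlinarith
  have hgain := sub_div_le_desingularizer_sub hψ hmono hint hs' hss' hs
  rcases hδ.eq_or_lt with rfl | hδ
  · refine mul_nonneg (by positivity) (le_trans ?_ hgain)
    rcases hss'.eq_or_lt with rfl | hlt
    · simp
    · exact div_nonneg (sub_nonneg.2 hss') (hψ s ⟨hs'.trans_lt hlt, hs⟩).le
  · have hs0 : 0 < s := by nlinarith [pow_pos hδ 2]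
    have hψs : 0 < ψ s := hψ s ⟨hs0, hs⟩
    have hψδ := hrel hs0 hδ
    rw [div_le_iff₀ hψs] at hgain
    rw [div_mul_eq_mul_div, le_div_iff₀ ha]
    -- `a δ² ≤ s - s' ≤ ψ s * Δφ ≤ b δ Δφ`, then cancel one factor `δ`
    have hΔ : 0 ≤ desingularizer ψ s - desingularizer ψ s' := by
      nlinarith
    nlinarith [mul_le_mul_of_nonneg_right hψδ hΔ]

end Desingularizer

theorem summable_dist_of_dist_le_sub {X : Type*} [PseudoMetricSpace X] {y : ℕ → X} {V : ℕ → ℝ}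
    {c : X} {ρ : ℝ} (hV : ∀ k, 0 ≤ V k)
    (hstep : ∀ k, dist (y k) c < ρ → dist (y k) (y (k + 1)) ≤ V k - V (k + 1))
    (h0 : dist (y 0) c + V 0 < ρ) :
    Summable fun k => dist (y k) (y (k + 1)) := by
  have hlen : ∀ m, ∑ j ∈ Finset.range m, dist (y j) (y (j + 1)) ≤ V 0 - V m := by
    intro m
    induction m with
    | zero => simp
    | succ m ih =>
      have hm : dist (y m) c < ρ := by
        calc dist (y m) c ≤ dist (y 0) (y m) + dist (y 0) c := dist_triangle_left _ _ _
          _ ≤ (V 0 - V m) + dist (y 0) c := by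
              gcongr; exact (dist_le_range_sum_dist y m).trans ih
          _ < ρ := by linarith [hV m]
      rw [Finset.sum_range_succ]
      linarith [hstep m hm]
  exact summable_of_sum_range_le (c := V 0) (fun _ => dist_nonneg) fun m =>
    (hlen m).trans (by linarith [hV m])

theorem tendsto_of_sufficient_decrease_of_relative_error {n : ℕ}
    {f : EuclideanSpace ℝ (Fin n) → ℝ} {x : ℕ → EuclideanSpace ℝ (Fin n)}
    {xbar : EuclideanSpace ℝ (Fin n)} {φ : ℕ → ℕ} {a b : ℝ} (ha : 0 < a) (hb : 0 < b)
    (hdecr : ∀ k, a * ‖x (k + 1) - x k‖ ^ 2 ≤ f (x k) - f (x (k + 1)))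
    (hrel : ∀ᶠ k in atTop, x (k + 1) ≠ x k → ‖gradient f (x k)‖ ≤ b * ‖x (k + 1) - x k‖)
    (hfx : Tendsto (fun k => f (x k)) atTop (𝓝 (f xbar)))
    (hφ : StrictMono φ) (hxφ : Tendsto (x ∘ φ) atTop (𝓝 xbar)) (hKL : KLProperty f xbar) :
    Tendsto x atTop (𝓝 xbar) := by
  obtain ⟨η, hη, U, hU, ψ, hψ, hmono, hint, hKLineq⟩ := hKL
  obtain ⟨ρ, hρ, hball⟩ := Metric.mem_nhds_iff.1 hU
  obtain ⟨K, hK⟩ := eventually_atTop.1 hrel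
  set F : ℕ → ℝ := fun k => f (x k) - f xbar with hF
  have hanti : Antitone F := antitone_nat_of_succ_le fun k => by
    simp only [hF]; nlinarith [hdecr k, sq_nonneg ‖x (k + 1) - x k‖]
  have hF0 : ∀ k, 0 ≤ F k := fun k => hanti.le_of_tendsto (by simpa using hfx.sub_const (f xbar)) k
  have hFlim : Tendsto F atTop (𝓝[≥] 0) :=
    tendsto_nhdsWithin_iff.2 ⟨by simpa using hfx.sub_const (f xbar), Eventually.of_forall hF0⟩
  have hφ' := hφ.tendsto_atTop
  -- the trapping argument starts where `dist (x k) xbar + (b / a) φ(F k) < ρ`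
  obtain ⟨k₀, hk₀K, hk₀η, hk₀ρ⟩ : ∃ k₀, K ≤ k₀ ∧ F k₀ < η ∧
      dist (x k₀) xbar + b / a * desingularizer ψ (F k₀) < ρ := by
    have hlim : Tendsto (fun j => dist (x (φ j)) xbar + b / a * desingularizer ψ (F (φ j)))
        atTop (𝓝 0) := by
      simpa using (tendsto_iff_dist_tendsto_zero.1 hxφ).add
        (((tendsto_desingularizer_nhdsGE_zero hη hint).comp (hFlim.comp hφ')).const_mul (b / a))
    obtain ⟨j, hjK, hjη, hjρ⟩ := ((hφ'.eventually (eventually_ge_atTop K)).and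
      ((hφ'.eventually ((tendsto_nhdsWithin_iff.1 hFlim).1.eventually (gt_mem_nhds hη))).and
        (hlim.eventually (gt_mem_nhds hρ)))).exists
    exact ⟨φ j, hjK, hjη, hjρ⟩
  have hsum : Summable fun k => dist (x (k₀ + k)) (x (k₀ + k + 1)) := by
    refine summable_dist_of_dist_le_sub (c := xbar) (ρ := ρ)
      (V := fun k => b / a * desingularizer ψ (F (k₀ + k)))
      (fun k => mul_nonneg (by positivity)
        (desingularizer_nonneg hψ ((hanti (Nat.le_add_right k₀ k)).trans_lt hk₀η)))
      (fun k hk => ?_) (by simpa using hk₀ρ)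
    have hFη : F (k₀ + k) < η := (hanti (Nat.le_add_right k₀ k)).trans_lt hk₀η
    rw [dist_eq_norm', ← mul_sub]
    refine le_div_mul_desingularizer_sub hψ hmono hint ha hb (norm_nonneg _) (hF0 _) hFη
      (by simp only [hF, ← add_assoc]; linarith [hdecr (k₀ + k)]) fun hs hδ => ?_
    have hne : x (k₀ + k + 1) ≠ x (k₀ + k) := sub_ne_zero.1 (norm_pos_iff.1 hδ)
    exact (hKLineq _ (hball hk) (sub_pos.1 hs) (by simp only [hF] at hFη; linarith)).trans
      (hK _ (by omega) hne)
  have hcauchy : CauchySeq x := cauchySeq_of_summable_dist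
    ((summable_nat_add_iff k₀).1 (by simpa only [add_comm _ k₀] using hsum))
  exact tendsto_nhds_of_cauchySeq_of_subseq hcauchy hφ' hxφ

theorem tendsto_zero_of_frequently_le_mul {u : ℕ → ℝ} {c : ℝ} (hc : c < 1) (hu : ∀ k, 0 ≤ u k)
    (hle : ∀ k, u (k + 1) ≤ u k) (hfreq : ∃ᶠ k in atTop, u (k + 1) ≤ c * u k) :
    Tendsto u atTop (𝓝 0) := by
  have hanti : Antitone u := antitone_nat_of_succ_le hle
  obtain ⟨l, hl⟩ : ∃ l, Tendsto u atTop (𝓝 l) :=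
    ⟨_, tendsto_atTop_ciInf hanti ⟨0, by rintro _ ⟨k, rfl⟩; exact hu k⟩⟩
  suffices l ≤ 0 by rwa [le_antisymm this (ge_of_tendsto' hl hu)] at hl
  by_contra! hl0
  have hev : ∀ᶠ k in atTop, c * u k < l :=
    (hl.const_mul c).eventually (gt_mem_nhds (by nlinarith))
  obtain ⟨k, hk, hk'⟩ := (hfreq.and_eventually hev).exists
  linarith [hanti.le_of_tendsto hl (k + 1)]

section Gradient

variable {E : Type*} [NormedAddCommGroup E] [InnerProductSpace ℝ E] [CompleteSpace E]
  {f : E → ℝ}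

theorem continuous_gradient_of_contDiff (hf : ContDiff ℝ 1 f) : Continuous (gradient f) :=
  (InnerProductSpace.toDual ℝ E).symm.continuous.comp (hf.continuous_fderiv one_ne_zero)

theorem mul_sq_le_sub_of_descent {L δ t : ℝ}
    (hdesc : ∀ a b : E, f b ≤ f a + inner ℝ (gradient f a) (b - a) + L / 2 * ‖b - a‖ ^ 2)
    {y v : E} (hv : inner ℝ (gradient f y) v ≤ -‖v‖ ^ 2) (ht : 0 ≤ t) (hLt : L * t ≤ 2 - δ) :
    t * δ / 2 * ‖v‖ ^ 2 ≤ f y - f (y + t • v) := by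
  have h := hdesc y (y + t • v)
  rw [add_sub_cancel_left, real_inner_smul_right, norm_smul, Real.norm_of_nonneg ht] at h
  nlinarith [mul_le_mul_of_nonneg_left hv ht,
    mul_nonneg (mul_nonneg (sub_nonneg.2 hLt) ht) (sq_nonneg ‖v‖)]

end Gradient

namespace IRGScheme

variable {n : ℕ} {f : EuclideanSpace ℝ (Fin n) → ℝ} {x g d : ℕ → EuclideanSpace ℝ (Fin n)}
  {ε r ρ t : ℕ → ℝ} {μ θ : ℝ}

theorem mu_pos (h : IRGScheme f x g d ε r ρ t μ θ) : 0 < μ := h.1.1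

theorem mu_lt_one (h : IRGScheme f x g d ε r ρ t μ θ) : μ < 1 := h.1.2

theorem eps_pos (h : IRGScheme f x g d ε r ρ t μ θ) (k : ℕ) : 0 < ε k := h.2.2.1 k

theorem radius_pos (h : IRGScheme f x g d ε r ρ t μ θ) (k : ℕ) : 0 < r k := h.2.2.2.1 k

theorem step_pos (h : IRGScheme f x g d ε r ρ t μ θ) (k : ℕ) : 0 < t k := h.2.2.2.2.2.1 k

theorem norm_sub_gradient_le (h : IRGScheme f x g d ε r ρ t μ θ) (k : ℕ) :
    ‖g k - gradient f (x k)‖ ≤ ε k :=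
  (h.2.2.2.2.2.2.1 k).trans (min_le_left _ _)

theorem null_step (h : IRGScheme f x g d ε r ρ t μ θ) {k : ℕ} (hk : ‖g k‖ ≤ r k + ε k) :
    r (k + 1) = μ * r k ∧ ε (k + 1) = θ * ε k ∧ d k = 0 :=
  h.2.2.2.2.2.2.2.1 k hk

theorem serious_step (h : IRGScheme f x g d ε r ρ t μ θ) {k : ℕ} (hk : r k + ε k < ‖g k‖) :
    r (k + 1) = r k ∧ ε (k + 1) = ε k ∧ d k = -(((‖g k‖ - ε k) / ‖g k‖) • g k) :=
  h.2.2.2.2.2.2.2.2.1 k hk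

theorem succ_sub (h : IRGScheme f x g d ε r ρ t μ θ) (k : ℕ) : x (k + 1) - x k = t k • d k := by
  rw [h.2.2.2.2.2.2.2.2.2 k, add_sub_cancel_left]

theorem norm_gradient_le (h : IRGScheme f x g d ε r ρ t μ θ) (k : ℕ) :
    ‖gradient f (x k)‖ ≤ ‖g k‖ + ε k := by
  have := norm_le_norm_add_norm_sub' (gradient f (x k)) (g k)
  rw [norm_sub_rev] at this
  linarith [h.norm_sub_gradient_le k]

theorem norm_dir_eq (h : IRGScheme f x g d ε r ρ t μ θ) {k : ℕ} (hk : r k + ε k < ‖g k‖) :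
    ‖d k‖ = ‖g k‖ - ε k := by
  have hg : 0 < ‖g k‖ := by linarith [h.eps_pos k, h.radius_pos k]
  rw [(h.serious_step hk).2.2, norm_neg, norm_smul,
    Real.norm_of_nonneg (div_nonneg (by linarith [h.radius_pos k]) hg.le),
    div_mul_cancel₀ _ hg.ne']

theorem inner_gradient_dir_le (h : IRGScheme f x g d ε r ρ t μ θ) (k : ℕ) :
    inner ℝ (gradient f (x k)) (d k) ≤ -‖d k‖ ^ 2 := by
  rcases le_or_gt ‖g k‖ (r k + ε k) with hk | hk
  · simp [(h.null_step hk).2.2]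
  have hg : 0 < ‖g k‖ := by linarith [h.eps_pos k, h.radius_pos k]
  have hdg : inner ℝ (g k) (d k) = -(‖d k‖ * ‖g k‖) := by
    rw [h.norm_dir_eq hk, (h.serious_step hk).2.2, inner_neg_right, real_inner_smul_right,
      real_inner_self_eq_norm_sq]
    field_simp
  have herr : inner ℝ (gradient f (x k) - g k) (d k) ≤ ε k * ‖d k‖ :=
    (real_inner_le_norm _ _).trans (by rw [norm_sub_rev]; gcongr; exact h.norm_sub_gradient_le k)
  calc inner ℝ (gradient f (x k)) (d k)
      = inner ℝ (g k) (d k) + inner ℝ (gradient f (x k) - g k) (d k) := by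
        rw [← inner_add_left, add_sub_cancel]
    _ ≤ -(‖d k‖ * ‖g k‖) + ε k * ‖d k‖ := by rw [hdg]; linarith
    _ = -‖d k‖ ^ 2 := by rw [h.norm_dir_eq hk]; ring

theorem norm_gradient_le_of_null (h : IRGScheme f x g d ε r ρ t μ θ) {k : ℕ}
    (hk : ‖g k‖ ≤ r k + ε k) : ‖gradient f (x k)‖ ≤ r k + 2 * ε k := by
  linarith [h.norm_gradient_le k]

theorem norm_gradient_le_three_mul (h : IRGScheme f x g d ε r ρ t μ θ) {k : ℕ}
    (hεr : ε k ≤ r k) (hne : x (k + 1) ≠ x k) : ‖gradient f (x k)‖ ≤ 3 * ‖d k‖ := by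
  rcases le_or_gt ‖g k‖ (r k + ε k) with hk | hk
  · exact absurd (by rw [← sub_eq_zero, h.succ_sub, (h.null_step hk).2.2, smul_zero]) hne
  linarith [h.norm_gradient_le k, h.norm_dir_eq hk]

theorem frequently_null_step (h : IRGScheme f x g d ε r ρ t μ θ) {c l : ℝ} (hc : 0 < c)
    (hdrop : ∀ k, c * ‖d k‖ ^ 2 ≤ f (x k) - f (x (k + 1)))
    (hfx : Tendsto (fun k => f (x k)) atTop (𝓝 l)) :
    ∃ᶠ k in atTop, ‖g k‖ ≤ r k + ε k := by
  rw [frequently_atTop]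
  intro K
  by_contra! hK
  have hrK : ∀ k, K ≤ k → r k = r K := fun k =>
    Nat.le_induction rfl (fun k hk ih => (h.serious_step (hK k hk)).1.trans ih) k
  have hgap : ∀ k, K ≤ k → c * r K ^ 2 ≤ f (x k) - f (x (k + 1)) := fun k hk => by
    have hd : r K ≤ ‖d k‖ := by
      linarith [h.norm_dir_eq (hK k hk), hK k hk, hrK k hk, h.eps_pos k]
    exact (mul_le_mul_of_nonneg_left (pow_le_pow_left₀ (h.radius_pos K).le hd 2) hc.le).trans
      (hdrop k)
  have hlim : Tendsto (fun k => f (x k) - f (x (k + 1))) atTop (𝓝 0) := by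
    simpa using hfx.sub (hfx.comp (tendsto_add_atTop_nat 1))
  have := ge_of_tendsto hlim (eventually_atTop.2 ⟨K, hgap⟩)
  nlinarith [mul_pos hc (pow_pos (h.radius_pos K) 2)]

theorem radius_succ_le (h : IRGScheme f x g d ε r ρ t μ θ) (k : ℕ) : r (k + 1) ≤ r k := by
  rcases le_or_gt ‖g k‖ (r k + ε k) with hk | hk
  · rw [(h.null_step hk).1]
    exact mul_le_of_le_one_left (h.radius_pos k).le h.mu_lt_one.le
  · exact (h.serious_step hk).1.le

theorem tendsto_radius_zero (h : IRGScheme f x g d ε r ρ t μ θ)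
    (hnull : ∃ᶠ k in atTop, ‖g k‖ ≤ r k + ε k) : Tendsto r atTop (𝓝 0) :=
  tendsto_zero_of_frequently_le_mul h.mu_lt_one (fun k => (h.radius_pos k).le) h.radius_succ_le
    (hnull.mono fun _ hk => (h.null_step hk).1.le)

theorem tendsto_eps_div_radius_zero (h : IRGScheme f x g d ε r ρ t μ θ) (hθμ : θ < μ)
    (hnull : ∃ᶠ k in atTop, ‖g k‖ ≤ r k + ε k) :
    Tendsto (fun k => ε k / r k) atTop (𝓝 0) := by
  have hnull_eq : ∀ k, ‖g k‖ ≤ r k + ε k → ε (k + 1) / r (k + 1) = θ / μ * (ε k / r k) :=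
    fun k hk => by
      rw [(h.null_step hk).1, (h.null_step hk).2.1, mul_div_mul_comm]
  have hle : ∀ k, ε (k + 1) / r (k + 1) ≤ ε k / r k := fun k => by
    rcases le_or_gt ‖g k‖ (r k + ε k) with hk | hk
    · rw [hnull_eq k hk]
      exact mul_le_of_le_one_left (div_pos (h.eps_pos k) (h.radius_pos k)).le
        ((div_le_one h.mu_pos).2 hθμ.le)
    · rw [(h.serious_step hk).1, (h.serious_step hk).2.1]
  exact tendsto_zero_of_frequently_le_mul ((div_lt_one h.mu_pos).2 hθμ)
    (fun k => (div_pos (h.eps_pos k) (h.radius_pos k)).le) hle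
    (hnull.mono fun k hk => (hnull_eq k hk).le)

theorem gradient_eq_zero_of_tendsto (h : IRGScheme f x g d ε r ρ t μ θ) (hθμ : θ < μ)
    (hnull : ∃ᶠ k in atTop, ‖g k‖ ≤ r k + ε k) {xbar : EuclideanSpace ℝ (Fin n)}
    (hgrad : ContinuousAt (gradient f) xbar) (hx : Tendsto x atTop (𝓝 xbar)) :
    gradient f xbar = 0 := by
  have hr := h.tendsto_radius_zero hnull
  have hε : Tendsto ε atTop (𝓝 0) := by
    simpa using ((h.tendsto_eps_div_radius_zero hθμ hnull).mul hr).congr fun k =>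
      div_mul_cancel₀ (ε k) (h.radius_pos k).ne'
  have hlim := ((hgrad.tendsto.comp hx).norm).sub (hr.add (hε.const_mul 2))
  rw [← norm_le_zero_iff]
  simpa using le_of_tendsto_of_frequently hlim
    (hnull.mono fun k hk => sub_nonpos.2 (h.norm_gradient_le_of_null hk))

theorem norm_succ_sub (h : IRGScheme f x g d ε r ρ t μ θ) (k : ℕ) :
    ‖x (k + 1) - x k‖ = t k * ‖d k‖ := by
  rw [h.succ_sub, norm_smul, Real.norm_of_nonneg (h.step_pos k).le]

theorem mul_norm_dir_sq_le_sub {L δ : ℝ} (h : IRGScheme f x g d ε r ρ t μ θ)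
    (hdesc : ∀ a b, f b ≤ f a + inner ℝ (gradient f a) (b - a) + L / 2 * ‖b - a‖ ^ 2)
    (hL : 0 < L) {k : ℕ} (ht : t k ≤ (2 - δ) / L) :
    t k * δ / 2 * ‖d k‖ ^ 2 ≤ f (x k) - f (x (k + 1)) := by
  rw [← sub_add_cancel (x (k + 1)) (x k), h.succ_sub, add_comm]
  exact mul_sq_le_sub_of_descent hdesc (h.inner_gradient_dir_le k) (h.step_pos k).le
    ((le_div_iff₀' hL).1 ht)

theorem sufficient_decrease {L δ : ℝ} (h : IRGScheme f x g d ε r ρ t μ θ)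
    (hdesc : ∀ a b, f b ≤ f a + inner ℝ (gradient f a) (b - a) + L / 2 * ‖b - a‖ ^ 2)
    (hL : 0 < L) (hδ : 0 < δ) {k : ℕ} (ht : t k ≤ (2 - δ) / L) :
    δ / (2 * ((2 - δ) / L)) * ‖x (k + 1) - x k‖ ^ 2 ≤ f (x k) - f (x (k + 1)) := by
  have htk := h.step_pos k
  have hT : 0 < (2 - δ) / L := htk.trans_le ht
  calc δ / (2 * ((2 - δ) / L)) * ‖x (k + 1) - x k‖ ^ 2
        = t k / ((2 - δ) / L) * (t k * δ / 2 * ‖d k‖ ^ 2) := by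
        rw [h.norm_succ_sub]; field_simp
    _ ≤ t k * δ / 2 * ‖d k‖ ^ 2 :=
        mul_le_of_le_one_left (by positivity) ((div_le_one hT).2 ht)
    _ ≤ f (x k) - f (x (k + 1)) := h.mul_norm_dir_sq_le_sub hdesc hL ht

theorem relative_error {δ' : ℝ} (h : IRGScheme f x g d ε r ρ t μ θ) (hδ' : 0 < δ') {k : ℕ}
    (ht : δ' ≤ t k) (hεr : ε k ≤ r k) (hne : x (k + 1) ≠ x k) :
    ‖gradient f (x k)‖ ≤ 3 / δ' * ‖x (k + 1) - x k‖ := by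
  rw [h.norm_succ_sub, div_mul_eq_mul_div, le_div_iff₀ hδ']
  nlinarith [h.norm_gradient_le_three_mul hεr hne, norm_nonneg (d k)]

end IRGScheme

theorem stmt19_general {n : ℕ} (f : EuclideanSpace ℝ (Fin n) → ℝ) (hf : ContDiff ℝ 1 f)
    (L : ℝ) (hL : 0 < L)
    (hdesc : ∀ a b : EuclideanSpace ℝ (Fin n),
      f b ≤ f a + (inner ℝ (gradient f a) (b - a) : ℝ) + L / 2 * ‖b - a‖ ^ 2)
    (x g d : ℕ → EuclideanSpace ℝ (Fin n)) (ε r t : ℕ → ℝ) (μ θ : ℝ)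
    (hirg : IRGScheme f x g d ε r ε t μ θ)
    (hθμ : θ < μ)
    (δ δ' : ℝ) (hδ : 0 < δ) (hδ' : 0 < δ')
    (hstep : ∀ k, t k ∈ Set.Icc δ' ((2 - δ) / L))
    (xbar : EuclideanSpace ℝ (Fin n))
    (hacc : ∃ φ : ℕ → ℕ, StrictMono φ ∧ Tendsto (x ∘ φ) atTop (nhds xbar))
    (hKL : KLProperty f xbar) :
    gradient f xbar = 0 ∧ Tendsto x atTop (nhds xbar) := by
  obtain ⟨φ, hφ, hxφ⟩ := hacc
  have hdecr k := hirg.sufficient_decrease hdesc hL hδ (hstep k).2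
  have ha : 0 < δ / (2 * ((2 - δ) / L)) :=
    div_pos hδ (mul_pos two_pos (hδ'.trans_le ((hstep 0).1.trans (hstep 0).2)))
  have hanti : Antitone fun k => f (x k) := antitone_nat_of_succ_le fun k => by
    nlinarith [hdecr k, sq_nonneg ‖x (k + 1) - x k‖]
  have hfx : Tendsto (fun k => f (x k)) atTop (𝓝 (f xbar)) :=
    (tendsto_iff_tendsto_subseq_of_antitone hanti hφ.tendsto_atTop).2
      ((hf.continuous.tendsto xbar).comp hxφ)
  have hnull := hirg.frequently_null_step (c := δ' * δ / 2) (by positivity) (fun k =>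
    (mul_le_mul_of_nonneg_right (by nlinarith [(hstep k).1]) (sq_nonneg _)).trans
      (hirg.mul_norm_dir_sq_le_sub hdesc hL (hstep k).2)) hfx
  have hrel : ∀ᶠ k in atTop,
      x (k + 1) ≠ x k → ‖gradient f (x k)‖ ≤ 3 / δ' * ‖x (k + 1) - x k‖ := by
    filter_upwards [(hirg.tendsto_eps_div_radius_zero hθμ hnull).eventually (gt_mem_nhds one_pos)]
      with k hk
    exact hirg.relative_error hδ' (hstep k).1 ((div_lt_one (hirg.radius_pos k)).1 hk).le
  have hx := tendsto_of_sufficient_decrease_of_relative_error ha (by positivity)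
    hdecr hrel hfx hφ hxφ hKL
  exact ⟨hirg.gradient_eq_zero_of_tendsto hθμ hnull
    (continuous_gradient_of_contDiff hf).continuousAt hx, hx⟩

/-- Theorem 5.6: for the IRG method with constant-type stepsizes
`t_k ∈ [δ', (2-δ)/L]`, `θ < μ`, `ρ_k = ε_k`, under the L-descent condition, if `xbar`
is an accumulation point of `{x^k}` and `f` satisfies the KL property at `xbar`, then
`xbar` is a stationary point of `f` and `x^k → xbar`. -/
theorem stmt19 {n : ℕ} (f : EuclideanSpace ℝ (Fin n) → ℝ) (hf : ContDiff ℝ 1 f)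
    (L : ℝ) (hL : 0 < L)
    (hdesc : ∀ a b : EuclideanSpace ℝ (Fin n),
      f b ≤ f a + (inner ℝ (gradient f a) (b - a) : ℝ) + L / 2 * ‖b - a‖ ^ 2)
    (x g d : ℕ → EuclideanSpace ℝ (Fin n)) (ε r t : ℕ → ℝ) (μ θ : ℝ)
    (hirg : IRGScheme f x g d ε r ε t μ θ)
    (hθμ : θ < μ)
    (δ δ' : ℝ) (hδ : 0 < δ) (hδ' : 0 < δ') (hδδ' : δ' ≤ (2 - δ) / L)
    (hstep : ∀ k, t k ∈ Set.Icc δ' ((2 - δ) / L))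
    (xbar : EuclideanSpace ℝ (Fin n))
    (hacc : ∃ φ : ℕ → ℕ, StrictMono φ ∧ Tendsto (x ∘ φ) atTop (nhds xbar))
    (hKL : KLProperty f xbar) :
    gradient f xbar = 0 ∧ Tendsto x atTop (nhds xbar) :=
  stmt19_general f hf L hL hdesc x g d ε r t μ θ hirg hθμ δ δ' hδ hδ' hstep xbar hacc hKL
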